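/- arXiv:1207.5129 — 2 statements merged into one kernel-verified Lean document; each statement's English description precedes it below -/
import Mathlib

section
/- Let 0 < a < b, r ∈ [0,1], ε ≥ 0, and let Ω = {x ∈ ℝ² : a < ‖x‖ < b}. Let u : ℝ² → ℝ be twice continuously differentiable with ‖∇u(x)‖ ≤ r for all x in the closure of Ω and ∫_Ω ‖D²u(x)‖² dx ≤ 2(1+r)ε, where ‖D²u(x)‖² = ∑_{i,j=1}^{2} (∂_{ij}u(x))² and the integral is with respect to 2-dimensional Lebesgue measure. Then there exists ρ ∈ (a,b) such that, setting f : [0,1] → ℝ³, f(t) = (ρ·cos(2πt), ρ·sin(2πt), u(ρ·cos(2πt), ρ·sin(2πt))), one has ∫₀¹ ‖f″(t)‖/‖f′(t)‖ dt ≤ 2π·(1 + √2·r + √(2εb/(b−a))). -/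
/-!
Along the circle `γ(t) = ρ (cos 2πt, sin 2πt)` the lifted curve `f = (γ, u ∘ γ)` has
`‖f'‖ ≥ ‖γ'‖ = 2πρ` and `f'' = (γ'', D²u(γ', γ') + Du γ'')`. With `‖Du‖ ≤ r` and the Frobenius
bound `|D²u(v, w)| ≤ ‖v‖ ‖w‖ ‖D²u‖` this gives `‖f''‖ / ‖f'‖ ≤ 2π(1 + r) + 2πρ ‖D²u(γ)‖`, and by
Jensen `∫₀¹ ‖D²u(γ)‖ ≤ (∫₀¹ ‖D²u(γ)‖²)^{1/2}`. In polar coordinates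
`∫_Ω ‖D²u‖² = ∫_a^b ρ ∫₀^{2π} ‖D²u(ρ, θ)‖² dθ dρ`, so for some radius the inner term
`ρ ∫₀^{2π} ‖D²u‖² dθ` is at most its average `2(1 + r)ε / (b - a)`.
-/

open MeasureTheory Real

/-- The second partial derivative `∂_{ij} u` of `u : ℝ² → ℝ`. -/
noncomputable def secondPartial (u : EuclideanSpace ℝ (Fin 2) → ℝ) (i j : Fin 2)
    (x : EuclideanSpace ℝ (Fin 2)) : ℝ :=
  fderiv ℝ (fun y => fderiv ℝ u y (EuclideanSpace.single j 1)) x (EuclideanSpace.single i 1)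

noncomputable section

theorem abs_apply_apply_le_mul_sqrt_sum_sq {ι : Type*} [Fintype ι] [DecidableEq ι]
    (B : EuclideanSpace ℝ ι →L[ℝ] EuclideanSpace ℝ ι →L[ℝ] ℝ) (v w : EuclideanSpace ℝ ι) :
    |B v w| ≤ ‖v‖ * ‖w‖ *
      √(∑ i, ∑ j, B (EuclideanSpace.single i 1) (EuclideanSpace.single j 1) ^ 2) := by
  set b : ι → ι → ℝ := fun i j => B (EuclideanSpace.single i 1) (EuclideanSpace.single j 1)
  have hB : B v w = ∑ p : ι × ι, (v p.1 * w p.2) * b p.1 p.2 := by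
    conv_lhs => rw [← (EuclideanSpace.basisFun ι ℝ).sum_repr v,
      ← (EuclideanSpace.basisFun ι ℝ).sum_repr w]
    simp [b, Fintype.sum_prod_type, Finset.mul_sum, mul_assoc, mul_left_comm,
      EuclideanSpace.basisFun_apply]
    exact Finset.sum_comm
  have hvw : ∑ p : ι × ι, (v p.1 * w p.2) ^ 2 = (‖v‖ * ‖w‖) ^ 2 := by
    simp [EuclideanSpace.norm_sq_eq, mul_pow, Fintype.sum_prod_type, Finset.sum_mul_sum]
  have hb : ∑ p : ι × ι, b p.1 p.2 ^ 2 = ∑ i, ∑ j, b i j ^ 2 := Fintype.sum_prod_type _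
  calc |B v w| ≤ √((‖v‖ * ‖w‖) ^ 2 * ∑ i, ∑ j, b i j ^ 2) := by
        refine abs_le_sqrt ?_
        rw [hB, ← hvw, ← hb]
        exact Finset.sum_mul_sq_le_sq_mul_sq _ _ _
    _ = ‖v‖ * ‖w‖ * √(∑ i, ∑ j, b i j ^ 2) := by
        rw [sqrt_mul (sq_nonneg _), sqrt_sq (by positivity)]

lemma differentiable_fderiv_of_contDiff_two {E : Type*} [NormedAddCommGroup E] [NormedSpace ℝ E]
    {u : E → ℝ} (hu : ContDiff ℝ 2 u) : Differentiable ℝ (fderiv ℝ u) :=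
  (hu.fderiv_right (m := 1) le_rfl).differentiable one_ne_zero

lemma HasDerivAt.fderiv_apply_of_contDiff_two {E : Type*} [NormedAddCommGroup E]
    [NormedSpace ℝ E] {u : E → ℝ} (hu : ContDiff ℝ 2 u) {γ γ' : ℝ → E} {γ'' : E} {t : ℝ}
    (hγ : HasDerivAt γ (γ' t) t) (hγ' : HasDerivAt γ' γ'' t) :
    HasDerivAt (fun s => fderiv ℝ u (γ s) (γ' s))
      (fderiv ℝ (fderiv ℝ u) (γ t) (γ' t) (γ' t) + fderiv ℝ u (γ t) γ'') t :=
  ((differentiable_fderiv_of_contDiff_two hu (γ t)).hasFDerivAt.comp_hasDerivAt t hγ).clm_apply hγ'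

def hessianNormSq (u : EuclideanSpace ℝ (Fin 2) → ℝ) (x : EuclideanSpace ℝ (Fin 2)) : ℝ :=
  ∑ i, ∑ j, secondPartial u i j x ^ 2

section Hessian

variable {u : EuclideanSpace ℝ (Fin 2) → ℝ}

lemma secondPartial_eq_fderiv_fderiv {x : EuclideanSpace ℝ (Fin 2)}
    (hu : DifferentiableAt ℝ (fderiv ℝ u) x) (i j : Fin 2) :
    secondPartial u i j x =
      fderiv ℝ (fderiv ℝ u) x (EuclideanSpace.single i 1) (EuclideanSpace.single j 1) := by
  rw [secondPartial, fderiv_clm_apply hu (differentiableAt_const _)]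
  simp

lemma abs_fderiv_fderiv_apply_le (hu : ContDiff ℝ 2 u) (x v w : EuclideanSpace ℝ (Fin 2)) :
    |fderiv ℝ (fderiv ℝ u) x v w| ≤ ‖v‖ * ‖w‖ * √(hessianNormSq u x) := by
  simpa [hessianNormSq,
    secondPartial_eq_fderiv_fderiv (differentiable_fderiv_of_contDiff_two hu x)]
    using abs_apply_apply_le_mul_sqrt_sum_sq (fderiv ℝ (fderiv ℝ u) x) v w

lemma hessianNormSq_nonneg (x : EuclideanSpace ℝ (Fin 2)) : 0 ≤ hessianNormSq u x := by
  unfold hessianNormSq; positivity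

lemma continuous_hessianNormSq (hu : ContDiff ℝ 2 u) : Continuous (hessianNormSq u) := by
  have : hessianNormSq u = fun x => ∑ i, ∑ j,
      fderiv ℝ (fderiv ℝ u) x (EuclideanSpace.single i 1) (EuclideanSpace.single j 1) ^ 2 := by
    ext x
    simp [hessianNormSq,
      secondPartial_eq_fderiv_fderiv (differentiable_fderiv_of_contDiff_two hu x)]
  rw [this]
  fun_prop

end Hessian

def circlePoint (ρ θ : ℝ) : EuclideanSpace ℝ (Fin 2) := !₂[ρ * cos θ, ρ * sin θ]

@[fun_prop]
lemma Continuous.circlePoint {X : Type*} [TopologicalSpace X] {ρ θ : X → ℝ} (hρ : Continuous ρ)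
    (hθ : Continuous θ) : Continuous fun x => _root_.circlePoint (ρ x) (θ x) := by
  unfold _root_.circlePoint; fun_prop

section Circle

variable (ρ : ℝ)

lemma norm_circlePoint (θ : ℝ) : ‖circlePoint ρ θ‖ = |ρ| := by
  rw [EuclideanSpace.norm_eq]
  simp [circlePoint, Fin.sum_univ_two, mul_pow, ← mul_add, sqrt_sq_eq_abs]

lemma circlePoint_add_two_pi (θ : ℝ) : circlePoint ρ (θ + 2 * π) = circlePoint ρ θ := by
  simp [circlePoint]

lemma hasDerivAt_circlePoint (θ : ℝ) :
    HasDerivAt (circlePoint ρ) (circlePoint ρ (θ + π / 2)) θ := by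
  have h : HasDerivAt (fun θ => ![ρ * cos θ, ρ * sin θ]) ![ρ * -sin θ, ρ * cos θ] θ := by
    refine hasDerivAt_pi.2 fun i => ?_
    fin_cases i
    · exact (hasDerivAt_cos θ).const_mul ρ
    · exact (hasDerivAt_sin θ).const_mul ρ
  refine ((PiLp.hasStrictFDerivAt_toLp 2 (𝕜 := ℝ) _).hasFDerivAt.comp_hasDerivAt θ h).congr_deriv ?_
  simp [circlePoint, cos_add_pi_div_two, sin_add_pi_div_two]

lemma HasDerivAt.circlePoint {θ : ℝ → ℝ} {θ' t : ℝ} (hθ : HasDerivAt θ θ' t) :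
    HasDerivAt (fun t => _root_.circlePoint ρ (θ t))
      (θ' • _root_.circlePoint ρ (θ t + π / 2)) t :=
  (hasDerivAt_circlePoint ρ (θ t)).scomp t hθ

end Circle

section Polar

open Set

lemma integral_Ioo_neg_pi_pi_comp_circlePoint (g : EuclideanSpace ℝ (Fin 2) → ℝ) (ρ : ℝ) :
    ∫ θ in Ioo (-π) π, g (circlePoint ρ θ) = ∫ θ in 0..2 * π, g (circlePoint ρ θ) := by
  have hper : Function.Periodic (fun θ => g (circlePoint ρ θ)) (2 * π) := fun θ => by
    simp only [circlePoint_add_two_pi]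
  rw [← integral_Ioc_eq_integral_Ioo, ← intervalIntegral.integral_of_le (by linarith [pi_pos]),
    ← zero_add (2 * π), ← hper.intervalIntegral_add_eq (-π) 0]
  ring_nf

lemma integral_eq_integral_polarCoord_target (g : EuclideanSpace ℝ (Fin 2) → ℝ) :
    ∫ x, g x = ∫ p in polarCoord.target, p.1 * g (circlePoint p.1 p.2) := by
  let e : ℝ × ℝ ≃ᵐ EuclideanSpace ℝ (Fin 2) :=
    MeasurableEquiv.finTwoArrow.symm.trans (MeasurableEquiv.toLp 2 (Fin 2 → ℝ))
  have he : MeasurePreserving e :=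
    (PiLp.volume_preserving_toLp (Fin 2)).comp (volume_preserving_finTwoArrow ℝ).symm
  rw [← he.integral_comp', ← integral_comp_polarCoord_symm]
  rfl

lemma setIntegral_annulus_eq {g : EuclideanSpace ℝ (Fin 2) → ℝ} (hg : Continuous g) {a b : ℝ}
    (ha : 0 ≤ a) :
    ∫ x in {x : EuclideanSpace ℝ (Fin 2) | a < ‖x‖ ∧ ‖x‖ < b}, g x =
      ∫ ρ in Ioo a b, ρ * ∫ θ in 0..2 * π, g (circlePoint ρ θ) := by
  set Ω := {x : EuclideanSpace ℝ (Fin 2) | a < ‖x‖ ∧ ‖x‖ < b}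
  set S := Ioo a b ×ˢ Ioo (-π) π
  set F : ℝ × ℝ → ℝ := fun p => p.1 * g (circlePoint p.1 p.2)
  have hΩ : MeasurableSet Ω :=
    (measurableSet_lt measurable_const measurable_norm).inter
      (measurableSet_lt measurable_norm measurable_const)
  have hS : S ⊆ polarCoord.target := by
    rw [polarCoord_target]
    exact prod_mono (Ioo_subset_Ioi_self.trans (Ioi_subset_Ioi ha)) subset_rfl
  have hind : ∀ p ∈ polarCoord.target,
      p.1 * Ω.indicator g (circlePoint p.1 p.2) = S.indicator F p := by
    rintro ⟨ρ, θ⟩ ⟨hρ, hθ⟩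
    have hmem : circlePoint ρ θ ∈ Ω ↔ ρ ∈ Ioo a b := by
      change a < _ ∧ _ < b ↔ a < ρ ∧ ρ < b
      rw [norm_circlePoint, abs_of_pos hρ]
    by_cases hρab : ρ ∈ Ioo a b
    · rw [indicator_of_mem (hmem.2 hρab), indicator_of_mem (show (ρ, θ) ∈ S from ⟨hρab, hθ⟩)]
    · rw [indicator_of_notMem (mt hmem.1 hρab), indicator_of_notMem fun h => hρab h.1,
        mul_zero]
  have hF : IntegrableOn F S (volume.prod volume) := by
    refine ContinuousOn.integrableOn_compact (isCompact_Icc.prod isCompact_Icc) ?_ |>.mono_set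
      (prod_mono Ioo_subset_Icc_self Ioo_subset_Icc_self)
    exact Continuous.continuousOn (by fun_prop)
  calc ∫ x in Ω, g x = ∫ p in polarCoord.target, S.indicator F p := by
        rw [← integral_indicator hΩ, integral_eq_integral_polarCoord_target]
        exact setIntegral_congr_fun polarCoord.open_target.measurableSet hind
    _ = ∫ p in S, F p := by
        rw [setIntegral_indicator (measurableSet_Ioo.prod measurableSet_Ioo),
          inter_eq_right.2 hS]
    _ = ∫ ρ in Ioo a b, ∫ θ in Ioo (-π) π, ρ * g (circlePoint ρ θ) := by
        rw [Measure.volume_eq_prod, setIntegral_prod F hF]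
    _ = _ := by
        simp_rw [integral_const_mul, integral_Ioo_neg_pi_pi_comp_circlePoint]

lemma exists_mem_Ioo_mul_integral_circlePoint_le {g : EuclideanSpace ℝ (Fin 2) → ℝ}
    (hg : Continuous g) {a b : ℝ} (ha : 0 ≤ a) (hab : a < b) :
    ∃ ρ ∈ Ioo a b, ρ * ∫ θ in 0..2 * π, g (circlePoint ρ θ) ≤
      (∫ x in {x : EuclideanSpace ℝ (Fin 2) | a < ‖x‖ ∧ ‖x‖ < b}, g x) / (b - a) := by
  have hJ : Continuous fun ρ => ρ * ∫ θ in 0..2 * π, g (circlePoint ρ θ) :=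
    continuous_id.mul <| intervalIntegral.continuous_parametric_intervalIntegral_of_continuous'
      (by fun_prop) _ _
  obtain ⟨ρ, hρ, hle⟩ := exists_le_setAverage (μ := volume) (s := Ioo a b) (by simp [hab])
    (by simp) (hJ.continuousOn.integrableOn_Icc.mono_set Ioo_subset_Icc_self)
  refine ⟨ρ, hρ, hle.trans_eq ?_⟩
  rw [setAverage_eq, volume_real_Ioo_of_le hab.le, setIntegral_annulus_eq hg ha, smul_eq_mul,
    inv_mul_eq_div]

end Polar

lemma intervalIntegral_sqrt_le_sqrt_intervalIntegral {g : ℝ → ℝ} (hg : Continuous g)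
    (hg0 : ∀ t, 0 ≤ g t) :
    ∫ t in (0 : ℝ)..1, √(g t) ≤ √(∫ t in (0 : ℝ)..1, g t) := by
  have : IsProbabilityMeasure (volume.restrict (Set.Ioc (0 : ℝ) 1)) := ⟨by simp⟩
  simp only [intervalIntegral.integral_of_le zero_le_one]
  exact strictConcaveOn_sqrt.concaveOn.le_map_integral continuous_sqrt.continuousOn isClosed_Ici
    (.of_forall hg0) hg.integrableOn_Ioc hg.sqrt.integrableOn_Ioc

def graphLift : EuclideanSpace ℝ (Fin 2) × ℝ →L[ℝ] EuclideanSpace ℝ (Fin 3) :=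
  LinearMap.toContinuousLinearMap
    { toFun := fun q => !₂[q.1 0, q.1 1, q.2]
      map_add' := fun p q => by ext i; fin_cases i <;> simp
      map_smul' := fun c q => by ext i; fin_cases i <;> simp }

section GraphLift

variable (p : EuclideanSpace ℝ (Fin 2)) (z : ℝ)

lemma norm_graphLift_sq : ‖graphLift (p, z)‖ ^ 2 = ‖p‖ ^ 2 + z ^ 2 := by
  simp [graphLift, EuclideanSpace.norm_sq_eq, Fin.sum_univ_two, Fin.sum_univ_three, add_assoc]

lemma norm_le_norm_graphLift : ‖p‖ ≤ ‖graphLift (p, z)‖ := by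
  refine (pow_le_pow_iff_left₀ (norm_nonneg _) (norm_nonneg _) two_ne_zero).1 ?_
  rw [norm_graphLift_sq]
  exact le_add_of_nonneg_right (sq_nonneg z)

lemma norm_graphLift_le : ‖graphLift (p, z)‖ ≤ ‖p‖ + |z| := by
  refine (pow_le_pow_iff_left₀ (norm_nonneg _) (by positivity) two_ne_zero).1 ?_
  rw [norm_graphLift_sq, add_sq, sq_abs]
  nlinarith [norm_nonneg p, abs_nonneg z]

end GraphLift

lemma HasDerivAt.graphLift {γ : ℝ → EuclideanSpace ℝ (Fin 2)} {z : ℝ → ℝ}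
    {γ' : EuclideanSpace ℝ (Fin 2)} {z' t : ℝ} (hγ : HasDerivAt γ γ' t) (hz : HasDerivAt z z' t) :
    HasDerivAt (fun t => graphLift (γ t, z t)) (graphLift (γ', z')) t :=
  (_root_.graphLift).hasFDerivAt.comp_hasDerivAt t (hγ.prodMk hz)

lemma norm_deriv_deriv_div_norm_deriv_graphLift_le {u : EuclideanSpace ℝ (Fin 2) → ℝ}
    (hu : ContDiff ℝ 2 u) {γ γ' : ℝ → EuclideanSpace ℝ (Fin 2)} {γ'' : EuclideanSpace ℝ (Fin 2)}
    {t r : ℝ} (hγ : ∀ s, HasDerivAt γ (γ' s) s) (hγ' : HasDerivAt γ' γ'' t) (hv : γ' t ≠ 0)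
    (hr : ‖fderiv ℝ u (γ t)‖ ≤ r) :
    ‖deriv (deriv fun s => graphLift (γ s, u (γ s))) t‖ /
        ‖deriv (fun s => graphLift (γ s, u (γ s))) t‖ ≤
      ‖γ''‖ * (1 + r) / ‖γ' t‖ + ‖γ' t‖ * √(hessianNormSq u (γ t)) := by
  have hderiv : deriv (fun s => graphLift (γ s, u (γ s))) =
      fun s => graphLift (γ' s, fderiv ℝ u (γ s) (γ' s)) := funext fun s =>
    ((hγ s).graphLift ((hu.differentiable two_ne_zero (γ s)).hasFDerivAt.comp_hasDerivAt s
      (hγ s))).deriv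
  rw [hderiv, (hγ'.graphLift ((hγ t).fderiv_apply_of_contDiff_two hu hγ')).deriv]
  set v := γ' t
  have hnum : ‖graphLift (γ'', fderiv ℝ (fderiv ℝ u) (γ t) v v + fderiv ℝ u (γ t) γ'')‖ ≤
      ‖γ''‖ * (1 + r) + ‖v‖ * (‖v‖ * √(hessianNormSq u (γ t))) := by
    have h2 := abs_fderiv_fderiv_apply_le hu (γ t) v v
    have h1 : |fderiv ℝ u (γ t) γ''| ≤ r * ‖γ''‖ :=
      ((fderiv ℝ u (γ t)).le_opNorm γ'').trans (by gcongr)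
    calc _ ≤ ‖γ''‖ + |fderiv ℝ (fderiv ℝ u) (γ t) v v + fderiv ℝ u (γ t) γ''| :=
          norm_graphLift_le _ _
      _ ≤ ‖γ''‖ + (|fderiv ℝ (fderiv ℝ u) (γ t) v v| + |fderiv ℝ u (γ t) γ''|) := by
          gcongr; exact abs_add_le _ _
      _ ≤ _ := by nlinarith
  calc _ ≤ (‖γ''‖ * (1 + r) + ‖v‖ * (‖v‖ * √(hessianNormSq u (γ t)))) / ‖v‖ :=
        div_le_div₀ ((norm_nonneg _).trans hnum) hnum (norm_pos_iff.2 hv)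
          (norm_le_norm_graphLift _ _)
    _ = _ := by field_simp

def liftedCircle (u : EuclideanSpace ℝ (Fin 2) → ℝ) (ρ t : ℝ) : EuclideanSpace ℝ (Fin 3) :=
  graphLift (circlePoint ρ (2 * π * t), u (circlePoint ρ (2 * π * t)))

section LiftedCircle

variable {u : EuclideanSpace ℝ (Fin 2) → ℝ} (hu : ContDiff ℝ 2 u) {ρ r : ℝ} (hρ : 0 < ρ)
include hu hρ

lemma norm_deriv_deriv_div_norm_deriv_liftedCircle_le {t : ℝ}
    (hr : ‖fderiv ℝ u (circlePoint ρ (2 * π * t))‖ ≤ r) :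
    ‖deriv (deriv (liftedCircle u ρ)) t‖ / ‖deriv (liftedCircle u ρ) t‖ ≤
      2 * π * (1 + r) + 2 * π * ρ * √(hessianNormSq u (circlePoint ρ (2 * π * t))) := by
  have hnorm : ∀ θ, ‖(2 * π) • circlePoint ρ θ‖ = 2 * π * ρ := fun θ => by
    rw [norm_smul, norm_circlePoint, Real.norm_of_nonneg two_pi_pos.le, abs_of_pos hρ]
  have hv : ∀ s, HasDerivAt (fun s => circlePoint ρ (2 * π * s))
      ((2 * π) • circlePoint ρ (2 * π * s + π / 2)) s := fun s =>
    (hasDerivAt_const_mul (2 * π)).circlePoint ρ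
  have hacc := (((hasDerivAt_const_mul (2 * π)).add_const (π / 2)).circlePoint ρ).const_smul
    (2 * π) (x := t)
  refine (norm_deriv_deriv_div_norm_deriv_graphLift_le hu hv hacc ?_ hr).trans_eq ?_
  · rw [← norm_pos_iff, hnorm]; positivity
  · rw [norm_smul, hnorm, hnorm, Real.norm_of_nonneg two_pi_pos.le]
    field_simp

lemma integral_norm_deriv_deriv_div_norm_deriv_liftedCircle_le
    (hr : ∀ t, ‖fderiv ℝ u (circlePoint ρ (2 * π * t))‖ ≤ r) :
    ∫ t in (0 : ℝ)..1, ‖deriv (deriv (liftedCircle u ρ)) t‖ / ‖deriv (liftedCircle u ρ) t‖ ≤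
      2 * π * (1 + r) +
        √(2 * π * ρ * (ρ * ∫ θ in 0..2 * π, hessianNormSq u (circlePoint ρ θ))) := by
  set q := fun θ => hessianNormSq u (circlePoint ρ θ)
  have hq : Continuous q := (continuous_hessianNormSq hu).comp (by fun_prop)
  calc _ ≤ ∫ t in (0 : ℝ)..1, (2 * π * (1 + r) + 2 * π * ρ * √(q (2 * π * t))) := by
        simp only [intervalIntegral.integral_of_le zero_le_one]
        refine integral_mono_of_nonneg (.of_forall fun t => by positivity)
          (Continuous.integrableOn_Ioc (by fun_prop))
          (.of_forall fun t => norm_deriv_deriv_div_norm_deriv_liftedCircle_le hu hρ (hr t))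
    _ = 2 * π * (1 + r) + 2 * π * ρ * ∫ t in (0 : ℝ)..1, √(q (2 * π * t)) := by
        rw [intervalIntegral.integral_add intervalIntegrable_const
          ((by fun_prop : Continuous _).intervalIntegrable _ _),
          intervalIntegral.integral_const_mul]
        simp
    _ ≤ 2 * π * (1 + r) + 2 * π * ρ * √(∫ t in (0 : ℝ)..1, q (2 * π * t)) := by
        gcongr
        exact intervalIntegral_sqrt_le_sqrt_intervalIntegral (by fun_prop)
          fun t => hessianNormSq_nonneg _
    _ = _ := by
        rw [intervalIntegral.integral_comp_mul_left q two_pi_pos.ne', mul_zero, mul_one,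
          smul_eq_mul]
        congr 1
        rw [show 2 * π * ρ * (ρ * ∫ θ in 0..2 * π, q θ) =
            (2 * π * ρ) ^ 2 * ((2 * π)⁻¹ * ∫ θ in 0..2 * π, q θ) by field_simp,
          sqrt_mul (sq_nonneg _), sqrt_sq (by positivity)]

end LiftedCircle

end

/-- Lemma 5.1 (PDElemma): if `‖∇u‖ ≤ r ≤ 1` on the closed annulus `a ≤ ‖x‖ ≤ b`
and `∫_Ω ‖D²u‖² ≤ 2(1+r)ε`, then there is a radius `ρ ∈ (a,b)` on whose circle the
lifted curve `f(t) = (ρcos 2πt, ρsin 2πt, u(ρcos 2πt, ρsin 2πt))` satisfies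
`∫₀¹ ‖f″‖/‖f′‖ dt ≤ 2π(1 + √2 r + √(2εb/(b−a)))`. -/
theorem stmt7 (a b r ε : ℝ) (ha : 0 < a) (hab : a < b) (hr0 : 0 ≤ r) (hr1 : r ≤ 1)
    (hε : 0 ≤ ε) (u : EuclideanSpace ℝ (Fin 2) → ℝ) (hu : ContDiff ℝ 2 u)
    (hgrad : ∀ x ∈ closure {x : EuclideanSpace ℝ (Fin 2) | a < ‖x‖ ∧ ‖x‖ < b},
      ‖gradient u x‖ ≤ r)
    (hhess : ∫ x in {x : EuclideanSpace ℝ (Fin 2) | a < ‖x‖ ∧ ‖x‖ < b},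
        ∑ i, ∑ j, (secondPartial u i j x) ^ 2 ≤ 2 * (1 + r) * ε) :
    ∃ ρ ∈ Set.Ioo a b, ∀ f : ℝ → EuclideanSpace ℝ (Fin 3),
      (∀ t, f t = (WithLp.equiv 2 (Fin 3 → ℝ)).symm
          ![ρ * Real.cos (2 * π * t), ρ * Real.sin (2 * π * t),
            u ((WithLp.equiv 2 (Fin 2 → ℝ)).symm
              ![ρ * Real.cos (2 * π * t), ρ * Real.sin (2 * π * t)])]) →
      ∫ t in (0 : ℝ)..1, ‖deriv (deriv f) t‖ / ‖deriv f t‖ ≤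
        2 * π * (1 + Real.sqrt 2 * r + Real.sqrt (2 * ε * b / (b - a))) := by
  obtain ⟨ρ, hρ, hρQ⟩ :=
    exists_mem_Ioo_mul_integral_circlePoint_le (continuous_hessianNormSq hu) ha.le hab
  have hρ0 : 0 < ρ := ha.trans hρ.1
  have hb : 0 < b := hρ0.trans hρ.2
  refine ⟨ρ, hρ, fun f hf => ?_⟩
  obtain rfl : f = liftedCircle u ρ := funext hf
  have hgradρ : ∀ t, ‖fderiv ℝ u (circlePoint ρ (2 * π * t))‖ ≤ r := fun t => by
    refine (LinearIsometryEquiv.norm_map _ _).symm.trans_le (hgrad _ (subset_closure ?_))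
    simpa [norm_circlePoint, abs_of_pos hρ0] using hρ
  set J := ρ * ∫ θ in 0..2 * π, hessianNormSq u (circlePoint ρ θ)
  have hJ : 2 * π * ρ * J ≤ (2 * π) ^ 2 * (2 * ε * b / (b - a)) := by
    have hJ0 : 0 ≤ J := mul_nonneg hρ0.le <|
      intervalIntegral.integral_nonneg two_pi_pos.le fun θ _ => hessianNormSq_nonneg _
    have hba : 0 < b - a := sub_pos.2 hab
    calc 2 * π * ρ * J ≤ 2 * π * b * (2 * (1 + r) * ε / (b - a)) :=
          mul_le_mul (by gcongr; exact hρ.2.le) (hρQ.trans (by gcongr; exact hhess)) hJ0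
            (by positivity)
      _ = 2 * π * (1 + r) * (2 * ε * b / (b - a)) := by ring
      _ ≤ (2 * π) ^ 2 * (2 * ε * b / (b - a)) := by
          gcongr
          nlinarith [pi_gt_three]
  calc _ ≤ 2 * π * (1 + r) + √(2 * π * ρ * J) :=
        integral_norm_deriv_deriv_div_norm_deriv_liftedCircle_le hu hρ0 hgradρ
    _ ≤ 2 * π * (1 + √2 * r) + 2 * π * √(2 * ε * b / (b - a)) := by
        gcongr
        · exact le_mul_of_one_le_left hr0 one_lt_sqrt_two.le
        · exact (sqrt_le_sqrt hJ).trans_eq (by rw [sqrt_mul (sq_nonneg _), sqrt_sq two_pi_pos.le])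
    _ = _ := by ring
end

section
/- Let X be a metric space, E a normed vector space, S ⊆ X, f : S → E, and let β > 0, δ ≥ 0, L ≥ 0. Suppose that for all x, y ∈ S with dist(x,y) ≤ β/2 one has ‖f(x) − f(y)‖ ≤ δ. Let γ : [0,1] → X be a continuous path with image contained in S whose length (total variation of γ on [0,1]) is at most L. Then ‖f(γ(1)) − f(γ(0))‖ ≤ (2L/β + 1)·δ. -/
open Set Filter Topology

/-- Greedy chaining sequence: `chainSeq γ β (k+1)` is the last time in `[chainSeq γ β k, 1]`
at which `γ` is still within distance `β/2` of `γ (chainSeq γ β k)`. -/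
noncomputable def chainSeq {X : Type*} [MetricSpace X] (γ : ℝ → X) (β : ℝ) : ℕ → ℝ
  | 0 => 0
  | (k+1) => sSup {s | s ∈ Set.Icc (chainSeq γ β k) 1 ∧
      dist (γ s) (γ (chainSeq γ β k)) ≤ β / 2}

/-- Chaining argument of Lemma 4.2 (GAgraph): if `f` oscillates by at most `δ`
on pairs of points of `S` at distance at most `β/2`, and `γ : [0,1] → S` is a
continuous path of length at most `L`, then `‖f(γ 1) − f(γ 0)‖ ≤ (2L/β + 1)δ`. -/
theorem stmt12 {X : Type*} [MetricSpace X] {E : Type*} [NormedAddCommGroup E]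
    [NormedSpace ℝ E] (S : Set X) (f : X → E) (β δ L : ℝ)
    (hβ : 0 < β) (hδ : 0 ≤ δ) (hL : 0 ≤ L)
    (hosc : ∀ x ∈ S, ∀ y ∈ S, dist x y ≤ β / 2 → ‖f x - f y‖ ≤ δ)
    (γ : ℝ → X) (hcont : ContinuousOn γ (Set.Icc 0 1))
    (himg : ∀ t ∈ Set.Icc (0 : ℝ) 1, γ t ∈ S)
    (hlen : eVariationOn γ (Set.Icc 0 1) ≤ ENNReal.ofReal L) :
    ‖f (γ 1) - f (γ 0)‖ ≤ (2 * L / β + 1) * δ := by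
  set t : ℕ → ℝ := chainSeq γ β with ht
  have ht0 : t 0 = 0 := rfl
  -- basic step analysis
  have key : ∀ k, t k ∈ Icc (0:ℝ) 1 →
      t (k+1) ∈ Icc (t k) 1 ∧ dist (γ (t (k+1))) (γ (t k)) ≤ β / 2 ∧
      (t (k+1) < 1 → β / 2 ≤ dist (γ (t (k+1))) (γ (t k))) := by
    intro k hk
    set A : Set ℝ := {s | s ∈ Icc (t k) 1 ∧ dist (γ s) (γ (t k)) ≤ β / 2} with hA
    have htk1 : t (k+1) = sSup A := rfl
    have hAsub : A ⊆ Icc (t k) 1 := fun s hs => hs.1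
    have hAne : A.Nonempty := ⟨t k, ⟨le_rfl, hk.2⟩, by simp [hβ.le, dist_self]; positivity⟩
    have hbdd : BddAbove A := ⟨1, fun s hs => hs.1.2⟩
    have hclosed : IsClosed A := by
      have hIccsub : Icc (t k) 1 ⊆ Icc (0:ℝ) 1 := Icc_subset_Icc hk.1 le_rfl
      have hgc : ContinuousOn (fun s => dist (γ s) (γ (t k))) (Icc (t k) 1) :=
        (continuous_id.dist continuous_const).comp_continuousOn (hcont.mono hIccsub)
      have hAeq : A = Icc (t k) 1 ∩ (fun s => dist (γ s) (γ (t k))) ⁻¹' Iic (β / 2) := by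
        ext s; exact Iff.rfl
      rw [hAeq]
      exact hgc.preimage_isClosed_of_isClosed isClosed_Icc isClosed_Iic
    have hmem : sSup A ∈ A := hclosed.csSup_mem hAne hbdd
    refine ⟨hmem.1, by rw [htk1]; exact hmem.2, ?_⟩
    intro hlt
    rw [htk1] at hlt ⊢
    -- every s > sSup A in [0,1] has dist > β/2; pass to the limit
    have hgt : ∀ s ∈ Ioc (sSup A) (1:ℝ), β / 2 < dist (γ s) (γ (t k)) := by
      intro s hs
      by_contra hle
      push_neg at hle
      have : s ∈ A := ⟨⟨(hmem.1.1.trans hs.1.le), hs.2⟩, hle⟩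
      exact absurd (le_csSup hbdd this) (not_le.mpr hs.1)
    have hne : (𝓝[Ioc (sSup A) 1] (sSup A)).NeBot := left_nhdsWithin_Ioc_neBot hlt
    have hsub : Ioc (sSup A) (1:ℝ) ⊆ Icc 0 1 := fun s hs =>
      ⟨hk.1.trans (hmem.1.1.trans hs.1.le), hs.2⟩
    have htend : Filter.Tendsto (fun s => dist (γ s) (γ (t k)))
        (𝓝[Ioc (sSup A) 1] (sSup A)) (𝓝 (dist (γ (sSup A)) (γ (t k)))) := by
      have hc : ContinuousWithinAt (fun s => dist (γ s) (γ (t k))) (Icc 0 1) (sSup A) :=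
        ((continuous_id.dist continuous_const).comp_continuousOn hcont) _
          ⟨hk.1.trans hmem.1.1, hmem.1.2⟩
      exact hc.mono hsub
    exact ge_of_tendsto htend (Filter.eventually_of_mem self_mem_nhdsWithin
      (fun s hs => (hgt s hs).le))
  -- t k stays in [0,1] and is monotone
  have hmem : ∀ k, t k ∈ Icc (0:ℝ) 1 := by
    intro k
    induction k with
    | zero => exact ⟨le_rfl, zero_le_one⟩
    | succ n ih =>
      have := (key n ih).1
      exact ⟨ih.1.trans this.1, this.2⟩
  have hmono : ∀ k, t k ≤ t (k+1) := fun k => ((key k (hmem k)).1).1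
  -- chain bound on f
  have hchain : ∀ n, ‖f (γ (t n)) - f (γ (t 0))‖ ≤ n * δ := by
    intro n
    induction n with
    | zero => simp
    | succ n ih =>
      have step : ‖f (γ (t (n+1))) - f (γ (t n))‖ ≤ δ :=
        hosc _ (himg _ (hmem (n+1))) _ (himg _ (hmem n)) (key n (hmem n)).2.1
      calc ‖f (γ (t (n+1))) - f (γ (t 0))‖
          ≤ ‖f (γ (t (n+1))) - f (γ (t n))‖ + ‖f (γ (t n)) - f (γ (t 0))‖ := by
            simpa using norm_sub_le_norm_sub_add_norm_sub (f (γ (t (n+1)))) (f (γ (t n))) (f (γ (t 0)))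
        _ ≤ δ + n * δ := add_le_add step ih
        _ = ((n:ℝ)+1) * δ := by ring
        _ = ((n+1 : ℕ) : ℝ) * δ := by push_cast; ring
  -- variation lower bound while t n < 1
  have hvar : ∀ n, t n < 1 →
      ENNReal.ofReal (n * (β / 2)) ≤ eVariationOn γ (Icc 0 1 ∩ Icc 0 (t n)) := by
    intro n
    induction n with
    | zero => intro _; simp
    | succ n ih =>
      intro hlt
      have hn : t n < 1 := lt_of_le_of_lt (hmono n) hlt
      have hge : β / 2 ≤ dist (γ (t (n+1))) (γ (t n)) := (key n (hmem n)).2.2 hlt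
      have hstep : ENNReal.ofReal (β / 2) ≤
          eVariationOn γ (Icc 0 1 ∩ Icc (t n) (t (n+1))) := by
        have hd : ENNReal.ofReal (β / 2) ≤ edist (γ (t (n+1))) (γ (t n)) := by
          rw [edist_dist]
          exact ENNReal.ofReal_le_ofReal hge
        refine hd.trans (eVariationOn.edist_le γ ?_ ?_)
        · exact ⟨hmem (n+1), hmono n, le_rfl⟩
        · exact ⟨hmem n, le_rfl, hmono n⟩
      have hadd := eVariationOn.Icc_add_Icc γ (s := Icc (0:ℝ) 1)
        (hmem n).1 (hmono n) (hmem n)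
      calc ENNReal.ofReal (((n+1 : ℕ) : ℝ) * (β / 2))
          = ENNReal.ofReal (((n:ℝ)+1) * (β / 2)) := by congr 1; push_cast; ring
        _ = ENNReal.ofReal ((n:ℝ) * (β / 2)) + ENNReal.ofReal (β / 2) := by
            rw [← ENNReal.ofReal_add (by positivity) (by positivity)]; ring_nf
        _ ≤ eVariationOn γ (Icc 0 1 ∩ Icc 0 (t n)) +
              eVariationOn γ (Icc 0 1 ∩ Icc (t n) (t (n+1))) := add_le_add (ih hn) hstep
        _ = eVariationOn γ (Icc 0 1 ∩ Icc 0 (t (n+1))) := hadd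
  -- pick N = ⌊2L/β⌋ + 1
  set N : ℕ := ⌊2 * L / β⌋₊ + 1 with hN
  have hNone : t N = 1 := by
    by_contra h
    have hlt : t N < 1 := lt_of_le_of_ne (hmem N).2 h
    have h1 : ENNReal.ofReal (N * (β / 2)) ≤ ENNReal.ofReal L := by
      refine (hvar N hlt).trans (le_trans (eVariationOn.mono γ inter_subset_left) hlen)
    have h2 : (N : ℝ) * (β / 2) ≤ L := by
      have := (ENNReal.ofReal_le_ofReal_iff hL).mp h1
      exact this
    have h3 : 2 * L / β < (N : ℝ) := by
      push_cast [hN]; exact Nat.lt_floor_add_one _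
    have h5 : 2 * L < (N : ℝ) * β := (div_lt_iff₀ hβ).mp h3
    linarith
  have hNle : (N : ℝ) ≤ 2 * L / β + 1 := by
    have : (⌊2 * L / β⌋₊ : ℝ) ≤ 2 * L / β := Nat.floor_le (by positivity)
    push_cast [hN]
    linarith
  calc ‖f (γ 1) - f (γ 0)‖ = ‖f (γ (t N)) - f (γ (t 0))‖ := by rw [hNone, ht0]
    _ ≤ N * δ := hchain N
    _ ≤ (2 * L / β + 1) * δ := mul_le_mul_of_nonneg_right hNle hδ
end
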